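/- If two i/o transition systems are branching bisimilar and both realise ω-translations, then they realise the same ω-translation. -/
import Mathlib


/-- A labelled transition system over actions `A` together with the silent action `τ`
(represented by `none`). -/
structure LTS (A : Type) where
  S : Type
  tr : S → Option A → S → Prop
  init : S

namespace LTS

variable {A : Type}

/-- Reflexive-transitive closure of τ-steps, `s ⇒ t`. -/
def Star (T : LTS A) : T.S → T.S → Prop :=
  Relation.ReflTransGen (fun s t => T.tr s none t)

/-- `s →(a) t`: either `s →a t`, or `a = τ` and `s = t`. -/
def OptStep (T : LTS A) (s : T.S) (a : Option A) (t : T.S) : Prop :=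
  T.tr s a t ∨ (a = none ∧ s = t)

/-- `R` is a branching bisimulation from `T₁` to `T₂`. -/
def IsBB (T₁ T₂ : LTS A) (R : T₁.S → T₂.S → Prop) : Prop :=
  (∀ s₁ s₂, R s₁ s₂ → ∀ a s₁', T₁.tr s₁ a s₁' →
    ∃ s₂'' s₂', T₂.Star s₂ s₂'' ∧ T₂.OptStep s₂'' a s₂' ∧ R s₁ s₂'' ∧ R s₁' s₂') ∧
  (∀ s₁ s₂, R s₁ s₂ → ∀ a s₂', T₂.tr s₂ a s₂' →
    ∃ s₁'' s₁', T₁.Star s₁ s₁'' ∧ T₁.OptStep s₁'' a s₁' ∧ R s₁'' s₂ ∧ R s₁' s₂')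

/-- `T₁` and `T₂` are branching bisimilar. -/
def BBisim (T₁ T₂ : LTS A) : Prop :=
  ∃ R, IsBB T₁ T₂ R ∧ R T₁.init T₂.init

end LTS

/-- Visible labels of an i/o transition system: input actions `?b` and output actions `!b`.
The silent action τ is represented by `none : Option IOLabel`. -/
inductive IOLabel where
  | inp : Bool → IOLabel
  | out : Bool → IOLabel
deriving DecidableEq

/-- An i/o transition system: a labelled transition system over `{?0,?1,!0,!1,τ}` whose
states are partitioned into input states (`I`) and execution states (the rest),
satisfying alternation, unambiguity and totality. -/
structure IOTS extends LTS IOLabel where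
  /-- the set of input states; the execution states are its complement -/
  I : S → Prop
  init_mem : I init
  /-- Alternation, input states: transitions are labelled `?b` and go to execution states. -/
  alt_I : ∀ s a t, I s → tr s a t → (∃ b, a = some (IOLabel.inp b)) ∧ ¬ I t
  /-- Alternation, execution states: transitions are labelled `!b` or `τ` and go to input states. -/
  alt_E : ∀ s a t, ¬ I s → tr s a t → (a = none ∨ ∃ b, a = some (IOLabel.out b)) ∧ I t
  /-- Unambiguity: every execution state has exactly one outgoing transition. -/
  unamb : ∀ s, ¬ I s → ∃! p : Option IOLabel × S, tr s p.1 p.2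
  /-- Totality: every input state has exactly two outgoing transitions, labelled `?0` and `?1`. -/
  total : ∀ s, I s → ∀ b : Bool, ∃! t, tr s (some (IOLabel.inp b)) t

namespace IOTS

/-- An infinite path through the transition system, with states `p` and labels `l`. -/
def InfPath (T : IOTS) (p : ℕ → T.S) (l : ℕ → Option IOLabel) : Prop :=
  ∀ n, T.tr (p n) (l n) (p (n + 1))

/-- The sequence of input-action labels of `l` (ignoring τ and output labels)
spells out the stream `x`. -/
def SpellsInput (l : ℕ → Option IOLabel) (x : ℕ → Bool) : Prop :=
  ∃ φ : ℕ → ℕ, StrictMono φ ∧ (∀ n, l (φ n) = some (IOLabel.inp (x n))) ∧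
    ∀ m b, l m = some (IOLabel.inp b) → ∃ n, φ n = m

/-- The sequence of output-action labels of `l` (ignoring τ and input labels)
spells out the stream `y`. -/
def SpellsOutput (l : ℕ → Option IOLabel) (y : ℕ → Bool) : Prop :=
  ∃ φ : ℕ → ℕ, StrictMono φ ∧ (∀ n, l (φ n) = some (IOLabel.out (y n))) ∧
    ∀ m b, l m = some (IOLabel.out b) → ∃ n, φ n = m

/-- Interactiveness: after every input transition, every infinite path contains an
output transition. -/
def Interactive (T : IOTS) : Prop :=
  ∀ s (b : Bool) s₀, T.tr s (some (IOLabel.inp b)) s₀ →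
    ∀ (p : ℕ → T.S) (l : ℕ → Option IOLabel), p 0 = s₀ →
      (∀ n, T.tr (p n) (l n) (p (n + 1))) → ∃ j b', l j = some (IOLabel.out b')

/-- `T` realises the ω-translation `φ`: for every input stream `x` there is an infinite
path from the initial state with input stream `x`, and every such path has output
stream `φ x`. -/
def Realises (T : IOTS) (φ : (ℕ → Bool) → (ℕ → Bool)) : Prop :=
  ∀ x : ℕ → Bool,
    (∃ p l, p 0 = T.init ∧ InfPath T p l ∧ SpellsInput l x) ∧
    (∀ p l, p 0 = T.init → InfPath T p l → SpellsInput l x → SpellsOutput l (φ x))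

end IOTS


namespace BBProof
open LTS
variable {A : Type}

open LTS
variable {A : Type}

def ChainFrom (T : LTS A) : T.S → List (Option A × T.S) → Prop
  | _, [] => True
  | u, e :: rest => T.tr u e.1 e.2 ∧ ChainFrom T e.2 rest

def EndOf (T : LTS A) : T.S → List (Option A × T.S) → T.S
  | u, [] => u
  | _, e :: rest => EndOf T e.2 rest

def StateAt (T : LTS A) : T.S → List (Option A × T.S) → ℕ → T.S
  | u, _, 0 => u
  | u, [], _ => u
  | _, e :: rest, i+1 => StateAt T e.2 rest i

theorem chainFrom_append {T : LTS A} {u : T.S} {s t : List (Option A × T.S)} :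
    ChainFrom T u (s ++ t) ↔ ChainFrom T u s ∧ ChainFrom T (EndOf T u s) t := by
  induction s generalizing u with
  | nil => simp [ChainFrom, EndOf]
  | cons e rest ih => simp [ChainFrom, EndOf, ih, and_assoc]

theorem endOf_append {T : LTS A} {u : T.S} {s t : List (Option A × T.S)} :
    EndOf T u (s ++ t) = EndOf T (EndOf T u s) t := by
  induction s generalizing u with
  | nil => simp [EndOf]
  | cons e rest ih => simp [EndOf, ih]

theorem stateAt_zero {T : LTS A} {u : T.S} {s : List (Option A × T.S)} :
    StateAt T u s 0 = u := by cases s <;> rfl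

theorem stateAt_length {T : LTS A} {u : T.S} {s : List (Option A × T.S)} :
    StateAt T u s s.length = EndOf T u s := by
  induction s generalizing u with
  | nil => rfl
  | cons e rest ih => simpa [StateAt, EndOf] using ih

theorem stateAt_succ {T : LTS A} {u : T.S} {s : List (Option A × T.S)} {i : ℕ}
    (hi : i < s.length) : StateAt T u s (i+1) = (s[i]).2 := by
  induction s generalizing u i with
  | nil => simp at hi
  | cons e rest ih =>
    cases i with
    | zero => simp [StateAt, stateAt_zero]
    | succ j =>
      simp only [List.length_cons, Nat.add_lt_add_iff_right] at hi
      simpa [StateAt] using ih hi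

theorem chainFrom_step {T : LTS A} {u : T.S} {s : List (Option A × T.S)}
    (h : ChainFrom T u s) {i : ℕ} (hi : i < s.length) :
    T.tr (StateAt T u s i) (s[i]).1 (StateAt T u s (i+1)) := by
  rw [stateAt_succ hi]
  induction s generalizing u i with
  | nil => simp at hi
  | cons e rest ih =>
    cases i with
    | zero => simpa [StateAt, stateAt_zero] using h.1
    | succ j =>
      simp only [List.length_cons, Nat.add_lt_add_iff_right] at hi
      simpa [StateAt] using ih h.2 hi

theorem star_list {T : LTS A} {u v : T.S} (h : T.Star u v) :
    ∃ L : List T.S, ChainFrom T u (L.map (fun s => ((none : Option A), s))) ∧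
      EndOf T u (L.map (fun s => ((none : Option A), s))) = v := by
  induction h with
  | refl => exact ⟨[], trivial, rfl⟩
  | @tail b c _ htr ih =>
    obtain ⟨L, hc, he⟩ := ih
    refine ⟨L ++ [c], ?_, ?_⟩
    · rw [List.map_append, chainFrom_append]
      exact ⟨hc, by rw [he]; exact ⟨htr, trivial⟩⟩
    · rw [List.map_append, endOf_append, he]; rfl

def SegSpec (a : Option A) {T : LTS A} (seg : List (Option A × T.S)) : Prop :=
  ∃ (L : List T.S) (t : List (Option A × T.S)),
    seg = L.map (fun s => ((none : Option A), s)) ++ t ∧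
    ((t = [] ∧ a = none) ∨ ∃ v, t = [(a, v)])

theorem segSpec_some {T : LTS A} {a : Option A} {seg : List (Option A × T.S)}
    (h : SegSpec a seg) {i : ℕ} (hi : i < seg.length) {b : A}
    (hb : (seg[i]).1 = some b) : a = some b ∧ i + 1 = seg.length := by
  obtain ⟨L, t, rfl, ht⟩ := h
  by_cases hiL : i < L.length
  · rw [List.getElem_append_left (by simpa using hiL)] at hb
    simp at hb
  · push_neg at hiL
    rcases ht with ⟨rfl, rfl⟩ | ⟨v, rfl⟩
    · simp at hi; omega
    · simp only [List.length_append, List.length_map, List.length_cons, List.length_nil] at hi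
      have hieq : i = L.length := by omega
      subst hieq
      rw [List.getElem_append_right (by simp)] at hb
      simp at hb
      simp [hb]

theorem getElem_concat_last {α : Type*} (l : List α) (x : α) :
    (l ++ [x])[(l ++ [x]).length - 1]'(by simp) = x := by
  rw [List.getElem_append_right (by simp)]
  simp

theorem segSpec_last {T : LTS A} {a : Option A} {seg : List (Option A × T.S)}
    (h : SegSpec a seg) {b : A} (hb : a = some b) :
    ∃ (hne : 0 < seg.length), (seg[seg.length - 1]'(by omega)).1 = a := by
  obtain ⟨L, t, rfl, ht⟩ := h
  rcases ht with ⟨rfl, rfl⟩ | ⟨v, rfl⟩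
  · simp at hb
  · have hlen : (L.map (fun s => ((none : Option A), s)) ++ [(a, v)]).length = L.length + 1 := by
      simp
    refine ⟨by omega, ?_⟩
    rw [getElem_concat_last]

def iter {σ : ℕ → Sort*} (f : ∀ n, σ n → σ (n+1)) (z : σ 0) : ∀ n, σ n
  | 0 => z
  | n + 1 => f n (iter f z n)

theorem iter_succ {σ : ℕ → Sort*} (f : ∀ n, σ n → σ (n+1)) (z : σ 0) (n : ℕ) :
    iter f z (n+1) = f n (iter f z n) := rfl


theorem getElem_congr' {α : Type*} {L L' : List α} {i i' : ℕ} (hL : L = L') (hi : i = i')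
    (h : i < L.length) : L[i]'h = L'[i']'(by subst hL hi; exact h) := by
  subst hL; subst hi; rfl

theorem transport (T₁ T₂ : LTS IOLabel) (R : T₁.S → T₂.S → Prop)
    (hR : LTS.IsBB T₁ T₂ R) (hR0 : R T₁.init T₂.init)
    (p : ℕ → T₁.S) (l : ℕ → Option IOLabel) (x y : ℕ → Bool)
    (hp0 : p 0 = T₁.init) (hpath : ∀ n, T₁.tr (p n) (l n) (p (n+1)))
    (hin : IOTS.SpellsInput l x) (hout : IOTS.SpellsOutput l y) :
    ∃ (q : ℕ → T₂.S) (m : ℕ → Option IOLabel), q 0 = T₂.init ∧ (∀ n, T₂.tr (q n) (m n) (q (n+1))) ∧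
      IOTS.SpellsInput m x ∧ IOTS.SpellsOutput m y := by
  -- one-step transport producing a segment
  have stepLem : ∀ n u, R (p n) u → ∃ seg, ChainFrom T₂ u seg ∧
      R (p (n+1)) (EndOf T₂ u seg) ∧ SegSpec (l n) seg := by
    intro n u hu
    obtain ⟨s'', s', hstar, hopt, _, hR'⟩ := hR.1 (p n) u hu (l n) (p (n+1)) (hpath n)
    obtain ⟨L, hcL, heL⟩ := star_list hstar
    rcases hopt with htr | ⟨ha, heq⟩
    · refine ⟨L.map (fun s => ((none : Option IOLabel), s)) ++ [(l n, s')], ?_, ?_,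
        L, [(l n, s')], rfl, Or.inr ⟨s', rfl⟩⟩
      · rw [chainFrom_append]
        exact ⟨hcL, by rw [heL]; exact ⟨htr, trivial⟩⟩
      · rw [endOf_append, heL]; exact hR'
    · refine ⟨L.map (fun s => ((none : Option IOLabel), s)), hcL, ?_,
        L, [], by simp, Or.inl ⟨rfl, ha⟩⟩
      rw [heL, heq]; exact hR'
  choose seg hcseg hrseg hsseg using stepLem
  have hR0' : R (p 0) T₂.init := by rw [hp0]; exact hR0
  set U : ∀ n : ℕ, {u : T₂.S // R (p n) u} :=
    iter (σ := fun n => {u : T₂.S // R (p n) u})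
      (fun n w => ⟨EndOf T₂ w.1 (seg n w.1 w.2), hrseg n w.1 w.2⟩) ⟨T₂.init, hR0'⟩ with hU
  set u : ℕ → T₂.S := fun n => (U n).1 with hu
  set sg : ℕ → List (Option IOLabel × T₂.S) := fun n => seg n (U n).1 (U n).2 with hsg
  have hu0 : u 0 = T₂.init := rfl
  have hu_succ : ∀ n, u (n+1) = EndOf T₂ (u n) (sg n) := fun n => rfl
  have hchain : ∀ n, ChainFrom T₂ (u n) (sg n) := fun n => hcseg n _ _
  have hspec : ∀ n, SegSpec (l n) (sg n) := fun n => hsseg n _ _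
  set o : ℕ → ℕ := fun n => ∑ i ∈ Finset.range n, (sg i).length with ho
  have ho0 : o 0 = 0 := Finset.sum_range_zero _
  have hosucc : ∀ n, o (n+1) = o n + (sg n).length := fun n => Finset.sum_range_succ _ n
  have homono : Monotone o := monotone_nat_of_le_succ (fun n => by rw [hosucc]; omega)
  have u_congr : ∀ n d, o (n + d) = o n → u (n + d) = u n := by
    intro n d
    induction d with
    | zero => intro _; rfl
    | succ d ih =>
      intro h
      have h' : o (n + d + 1) = o n := h
      have h1 : o n ≤ o (n + d) := homono (Nat.le_add_right n d)
      have h2 : o (n + d + 1) = o (n + d) + (sg (n + d)).length := hosucc (n + d)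
      have h3 : o (n + d) = o n := by
        have h2' := homono (Nat.le_succ (n + d))
        omega
      have h4 : (sg (n + d)).length = 0 := by omega
      have h5 : sg (n + d) = [] := List.length_eq_zero_iff.1 h4
      have h6 : u (n + d + 1) = u (n + d) := by rw [hu_succ (n + d), h5]; rfl
      show u (n + d + 1) = u n
      rw [h6, ih h3]
  have hne : ∀ n b, l n = some b → 0 < (sg n).length := by
    intro n b hb
    obtain ⟨h1, _⟩ := segSpec_last (hspec n) hb
    exact h1
  obtain ⟨φ₀, hφ₀mono, hφ₀lab, hφ₀surj⟩ := hin
  have hgrow : ∀ j, j + 1 ≤ o (φ₀ j + 1) := by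
    intro j
    induction j with
    | zero =>
      have h1 := hne (φ₀ 0) _ (hφ₀lab 0)
      have h2 := hosucc (φ₀ 0)
      omega
    | succ j ih =>
      have h1 : φ₀ j + 1 ≤ φ₀ (j+1) := hφ₀mono (Nat.lt_succ_self j)
      have h2 := homono h1
      have h3 := hne (φ₀ (j+1)) _ (hφ₀lab (j+1))
      have h4 := hosucc (φ₀ (j+1))
      omega
  have hex : ∀ k, ∃ n, k < o (n+1) := by
    intro k
    exact ⟨φ₀ k, by have h1 := hgrow k; omega⟩
  set blk : ℕ → ℕ := fun k => Nat.find (hex k) with hblk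
  have hblk1 : ∀ k, k < o (blk k + 1) := fun k => Nat.find_spec (hex k)
  have hblk_min : ∀ k n, k < o (n+1) → blk k ≤ n := fun k n h => Nat.find_min' (hex k) h
  have hblk2 : ∀ k, o (blk k) ≤ k := by
    intro k
    rcases h : blk k with _ | j
    · rw [ho0]; omega
    · have := Nat.find_min (hex k) (show j < blk k by omega)
      omega
  have hblk_eq : ∀ k n, o n ≤ k → k < o (n+1) → blk k = n := by
    intro k n h1 h2
    refine le_antisymm (hblk_min k n h2) ?_
    by_contra hcon
    push_neg at hcon
    have : blk k + 1 ≤ n := hcon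
    have := homono this
    have := hblk1 k
    omega
  have hidx : ∀ k, k - o (blk k) < (sg (blk k)).length := by
    intro k
    have h1 := hblk1 k
    have h2 := hblk2 k
    have h3 := hosucc (blk k)
    omega
  set m : ℕ → Option IOLabel := fun k => ((sg (blk k))[k - o (blk k)]'(hidx k)).1 with hm
  set q : ℕ → T₂.S := fun k => StateAt T₂ (u (blk k)) (sg (blk k)) (k - o (blk k)) with hq
  have hq0 : q 0 = T₂.init := by
    have h1 : o (blk 0) = 0 := le_antisymm (hblk2 0) (Nat.zero_le _)
    have h2 : q 0 = u (blk 0) := by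
      rw [hq]
      simp only [Nat.zero_sub]
      exact stateAt_zero
    rw [h2]
    have := u_congr 0 (blk 0) (by rw [Nat.zero_add, h1, ho0])
    rw [Nat.zero_add] at this
    rw [this, hu0]
  have hblkmono : ∀ k, blk k ≤ blk (k+1) := by
    intro k
    have h := hblk1 (k+1)
    exact hblk_min k (blk (k+1)) (by omega)
  have hkey : ∀ k, q (k+1) = StateAt T₂ (u (blk k)) (sg (blk k)) (k - o (blk k) + 1) := by
    intro k
    by_cases hc : k + 1 < o (blk k + 1)
    · have hb : blk (k+1) = blk k := hblk_eq (k+1) (blk k) (by have := hblk2 k; omega) hc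
      have hidx' : k + 1 - o (blk k) = k - o (blk k) + 1 := by have := hblk2 k; omega
      rw [hq]
      simp only
      rw [hb, hidx']
    · have hc' : k + 1 = o (blk k + 1) := by have := hblk1 k; omega
      have hgt : blk k < blk (k+1) := by
        rcases lt_or_eq_of_le (hblkmono k) with h | h
        · exact h
        · exfalso; have := hblk1 (k+1); rw [h] at hc'; omega
      have ho2 : o (blk (k+1)) = k + 1 := by
        refine le_antisymm (hblk2 (k+1)) ?_
        calc k + 1 = o (blk k + 1) := hc'
          _ ≤ o (blk (k+1)) := homono hgt
      have hq1 : q (k+1) = u (blk (k+1)) := by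
        rw [hq]
        simp only
        rw [show k + 1 - o (blk (k+1)) = 0 by omega]
        exact stateAt_zero
      have hq2 : u (blk (k+1)) = u (blk k + 1) := by
        have := u_congr (blk k + 1) (blk (k+1) - (blk k + 1))
          (by rw [show blk k + 1 + (blk (k+1) - (blk k + 1)) = blk (k+1) by omega, ho2, ← hc'])
        rw [show blk k + 1 + (blk (k+1) - (blk k + 1)) = blk (k+1) by omega] at this
        exact this
      have hlen : k - o (blk k) + 1 = (sg (blk k)).length := by
        have h1 := hblk2 k
        have h2 := hosucc (blk k)
        omega
      rw [hq1, hq2, hu_succ, hlen, stateAt_length]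
  have hqpath : ∀ k, T₂.tr (q k) (m k) (q (k+1)) := by
    intro k
    rw [hkey k]
    exact chainFrom_step (hchain (blk k)) (hidx k)
  -- label transfer
  have htrans : ∀ n b, l n = some b → m (o (n+1) - 1) = some b := by
    intro n b hb
    have hlen := hne n b hb
    have hosn := hosucc n
    have h1 : o n ≤ o (n+1) - 1 := by omega
    have h2 : o (n+1) - 1 < o (n+1) := by omega
    have hbk : blk (o (n+1) - 1) = n := hblk_eq _ n h1 h2
    obtain ⟨hpos, hlast⟩ := segSpec_last (hspec n) hb
    have hieq : (o (n+1) - 1) - o (blk (o (n+1) - 1)) = (sg n).length - 1 := by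
      rw [hbk]; omega
    rw [hm]
    simp only
    rw [getElem_congr' (congrArg sg hbk) hieq (hidx _)]
    rw [hlast, hb]
  have hback : ∀ k b, m k = some b → l (blk k) = some b ∧ k = o (blk k + 1) - 1 := by
    intro k b hb
    obtain ⟨h1, h2⟩ := segSpec_some (hspec (blk k)) (hidx k) hb
    refine ⟨h1, ?_⟩
    have h3 := hblk2 k
    have h4 := hosucc (blk k)
    omega
  have hgen : ∀ (f : Bool → IOLabel) (z : ℕ → Bool),
      (∃ ρ : ℕ → ℕ, StrictMono ρ ∧ (∀ n, l (ρ n) = some (f (z n))) ∧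
        ∀ mm b, l mm = some (f b) → ∃ n, ρ n = mm) →
      (∃ ρ : ℕ → ℕ, StrictMono ρ ∧ (∀ n, m (ρ n) = some (f (z n))) ∧
        ∀ mm b, m mm = some (f b) → ∃ n, ρ n = mm) := by
    rintro f z ⟨ρ, hrmono, hrlab, hrsurj⟩
    refine ⟨fun j => o (ρ j + 1) - 1, ?_, ?_, ?_⟩
    · intro i j hij
      have hi := hne (ρ i) _ (hrlab i)
      have hj := hne (ρ j) _ (hrlab j)
      have h1 : ρ i + 1 ≤ ρ j := hrmono hij
      have h2 := homono h1
      have h3 := hosucc (ρ i)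
      have h4 := hosucc (ρ j)
      have h5 : o (ρ i) ≤ o (ρ i + 1) := homono (by omega)
      have h6 : o (ρ j) ≤ o (ρ j + 1) := homono (by omega)
      show o (ρ i + 1) - 1 < o (ρ j + 1) - 1
      omega
    · intro j; exact htrans (ρ j) _ (hrlab j)
    · intro k b hb
      obtain ⟨h1, h2⟩ := hback k (f b) hb
      obtain ⟨j, hj⟩ := hrsurj (blk k) b h1
      refine ⟨j, ?_⟩
      show o (ρ j + 1) - 1 = k
      rw [hj, ← h2]
  exact ⟨q, m, hq0, hqpath, hgen IOLabel.inp x ⟨φ₀, hφ₀mono, hφ₀lab, hφ₀surj⟩,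
    hgen IOLabel.out y hout⟩

theorem spellsOutput_unique {l : ℕ → Option IOLabel} {y y' : ℕ → Bool}
    (h : IOTS.SpellsOutput l y) (h' : IOTS.SpellsOutput l y') : y = y' := by
  obtain ⟨fa, ha1, ha2, ha3⟩ := h
  obtain ⟨fb, hb1, hb2, hb3⟩ := h'
  have hr : Set.range fa = Set.range fb := by
    ext k
    constructor
    · rintro ⟨n, rfl⟩; exact hb3 (fa n) (y n) (ha2 n)
    · rintro ⟨n, rfl⟩; exact ha3 (fb n) (y' n) (hb2 n)
  have hfab : fa = fb := (StrictMono.range_inj ha1 hb1).1 hr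
  funext n
  have h1 := ha2 n
  have h2 := hb2 n
  rw [hfab, h2] at h1
  simp only [Option.some.injEq, IOLabel.out.injEq] at h1
  exact h1.symm

end BBProof

theorem stmt_9 (T₁ T₂ : IOTS) (φ ψ : (ℕ → Bool) → (ℕ → Bool))
    (hbb : LTS.BBisim T₁.toLTS T₂.toLTS)
    (h₁ : IOTS.Realises T₁ φ) (h₂ : IOTS.Realises T₂ ψ) :
    φ = ψ := by
  funext x
  obtain ⟨p, l, hp0, hpath, hin⟩ := (h₁ x).1
  have hout := (h₁ x).2 p l hp0 hpath hin
  obtain ⟨R, hR, hR0⟩ := hbb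
  obtain ⟨q, m, hq0, hqpath, hin', hout'⟩ :=
    BBProof.transport T₁.toLTS T₂.toLTS R hR hR0 p l x (φ x) hp0 hpath hin hout
  have hout'' := (h₂ x).2 q m hq0 hqpath hin'
  exact BBProof.spellsOutput_unique hout' hout''
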